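/- Let ℬ = {β, β*} be the roots of an integer quadratic Ax² + Bx + C with β irrational (β ∉ ℚ ∪ {∞}), and let N ≥ 0, k ≥ 1 with N + k > 2. Then the set of integer points (b_1, …, b_N, a_1, …, a_k) ∈ ℤ^{N+k} on the PCF variety V(ℬ)_{N,k} with |entries| > 2 in every coordinate has cardinality at most 2. -/

import Mathlib

/-!
Since every partial quotient has `|c| > 2`, each map `z ↦ c + 1/z` sends `{‖z‖ ≥ 2}` into
`{‖z‖ ≥ 5/2}` and is `1/4`-Lipschitz there, so the periodic block `a` has a fixed point `y` in that
region and `T = [b₁, …, b_N, y]` is the value of the periodic continued fraction. From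
`E · D(b) = D(b) · D(a)` the vector `(T, 1)` is an eigenvector of `E`, so `T` is a root of
`E₂₁x² + (E₂₂ - E₁₁)x - E₁₂`, a nonzero multiple of `Ax² + Bx + C`; thus `T ∈ {β, β*}`. Finally the
value determines the digits: two tails of norm `≥ 5/2` have reciprocals of norm `≤ 2/5`, so the
leading digits cannot differ by a nonzero integer. Hence at most one point has value `β` and at
most one has value `β*`.
-/

/-- The matrix `D(x) = [[x, 1], [1, 0]]` over `ℤ`. -/
def DmZ (x : ℤ) : Matrix (Fin 2) (Fin 2) ℤ :=
  !![x, 1; 1, 0]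

/-- The matrix `t = [[0, 1], [1, 0]]` over `ℤ`. -/
def tmZ : Matrix (Fin 2) (Fin 2) ℤ :=
  !![0, 1; 1, 0]

/-- The ordered product `D(x 0) ⋯ D(x (n-1))`. -/
def DlistZ {n : ℕ} (x : Fin n → ℤ) : Matrix (Fin 2) (Fin 2) ℤ :=
  (List.ofFn fun i => DmZ (x i)).prod

/-- The matrix `E = D(b₁)⋯D(b_N) D(a₁)⋯D(a_k) t D(-b_N)⋯D(-b₁) t`. -/
def EmatZ (N k : ℕ) (b : Fin N → ℤ) (a : Fin k → ℤ) : Matrix (Fin 2) (Fin 2) ℤ :=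
  DlistZ b * DlistZ a * tmZ * DlistZ (fun i : Fin N => -(b i.rev)) * tmZ

open Matrix Set

/-- `cfEval [c₁, …, cₙ] z` is the continued fraction `[c₁, …, cₙ, z] = c₁ + 1/(c₂ + ⋯ + 1/z)`. -/
noncomputable def cfEval : List ℤ → ℂ → ℂ
  | [], z => z
  | c :: l, z => c + (cfEval l z)⁻¹

@[simp]
lemma cfEval_nil (z : ℂ) : cfEval [] z = z := rfl

@[simp]
lemma cfEval_cons (c : ℤ) (l : List ℤ) (z : ℂ) : cfEval (c :: l) z = c + (cfEval l z)⁻¹ := rfl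

lemma cfEval_append (l₁ l₂ : List ℤ) (z : ℂ) : cfEval (l₁ ++ l₂) z = cfEval l₁ (cfEval l₂ z) := by
  induction l₁ with
  | nil => rfl
  | cons c l ih => simp [ih]

lemma norm_inv_le_of_le_norm {𝕜 : Type*} [NormedDivisionRing 𝕜] {z : 𝕜} {r : ℝ} (hr : 0 < r) (hz : r ≤ ‖z‖) : ‖z⁻¹‖ ≤ r⁻¹ := by
  rw [norm_inv]
  exact inv_anti₀ hr hz

lemma three_le_norm_intCast {c : ℤ} (hc : 2 < |c|) : (3 : ℝ) ≤ ‖(c : ℂ)‖ := by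
  rw [Complex.norm_intCast]
  exact_mod_cast hc

lemma five_halves_le_norm_intCast_add_inv {c : ℤ} (hc : 2 < |c|) {w : ℂ} (hw : 2 ≤ ‖w‖) :
    5 / 2 ≤ ‖(c : ℂ) + w⁻¹‖ := by
  have h₁ := three_le_norm_intCast hc
  have h₂ := norm_inv_le_of_le_norm two_pos hw
  have h₃ := norm_sub_le_norm_add (c : ℂ) w⁻¹
  linarith

lemma two_le_norm_cfEval {l : List ℤ} (hl : ∀ c ∈ l, 2 < |c|) {z : ℂ} (hz : 2 ≤ ‖z‖) :
    2 ≤ ‖cfEval l z‖ := by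
  induction l with
  | nil => exact hz
  | cons c l ih =>
    have := five_halves_le_norm_intCast_add_inv (hl c (by simp))
      (ih fun x hx => hl x (List.mem_cons_of_mem c hx))
    rw [cfEval_cons]
    linarith

lemma five_halves_le_norm_cfEval_cons {c : ℤ} {l : List ℤ} (hl : ∀ x ∈ c :: l, 2 < |x|) {z : ℂ}
    (hz : 2 ≤ ‖z‖) : 5 / 2 ≤ ‖cfEval (c :: l) z‖ :=
  five_halves_le_norm_intCast_add_inv (hl c (by simp))
    (two_le_norm_cfEval (fun x hx => hl x (List.mem_cons_of_mem c hx)) hz)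

lemma five_halves_le_norm_cfEval {l : List ℤ} (hl : ∀ c ∈ l, 2 < |c|) {z : ℂ}
    (hz : 5 / 2 ≤ ‖z‖) : 5 / 2 ≤ ‖cfEval l z‖ := by
  cases l with
  | nil => exact hz
  | cons c l => exact five_halves_le_norm_cfEval_cons hl (by linarith)

lemma norm_inv_sub_inv_le {z w : ℂ} (hz : 2 ≤ ‖z‖) (hw : 2 ≤ ‖w‖) :
    ‖z⁻¹ - w⁻¹‖ ≤ ‖z - w‖ / 4 := by
  have hz₀ : z ≠ 0 := norm_pos_iff.mp (by linarith)
  have hw₀ : w ≠ 0 := norm_pos_iff.mp (by linarith)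
  rw [inv_sub_inv hz₀ hw₀, norm_div, norm_mul, norm_sub_rev]
  gcongr
  nlinarith

lemma norm_cfEval_sub_cfEval_le {l : List ℤ} (hl : ∀ c ∈ l, 2 < |c|) {z w : ℂ}
    (hz : 2 ≤ ‖z‖) (hw : 2 ≤ ‖w‖) :
    ‖cfEval l z - cfEval l w‖ ≤ (1 / 4) ^ l.length * ‖z - w‖ := by
  induction l with
  | nil => simp
  | cons c l ih =>
    have hl' : ∀ x ∈ l, 2 < |x| := fun x hx => hl x (List.mem_cons_of_mem c hx)
    calc ‖cfEval (c :: l) z - cfEval (c :: l) w‖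
        = ‖(cfEval l z)⁻¹ - (cfEval l w)⁻¹‖ := by simp
      _ ≤ ‖cfEval l z - cfEval l w‖ / 4 :=
        norm_inv_sub_inv_le (two_le_norm_cfEval hl' hz) (two_le_norm_cfEval hl' hw)
      _ ≤ (1 / 4) ^ (c :: l).length * ‖z - w‖ := by
        rw [List.length_cons, pow_succ]
        linarith [ih hl']

lemma exists_cfEval_eq_self {l : List ℤ} (hne : l ≠ []) (hl : ∀ c ∈ l, 2 < |c|) :
    ∃ y : ℂ, 5 / 2 ≤ ‖y‖ ∧ cfEval l y = y := by
  set s : Set ℂ := {z | 2 ≤ ‖z‖}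
  have hmaps : MapsTo (cfEval l) s s := fun z hz => two_le_norm_cfEval hl hz
  have hcontr : ContractingWith ((1 / 4) ^ l.length) (hmaps.restrict _ s s) := by
    refine ⟨pow_lt_one₀ (by positivity) (by norm_num) (by simpa using hne), ?_⟩
    refine LipschitzWith.of_dist_le_mul fun z w => ?_
    simpa [Subtype.dist_eq, dist_eq_norm] using norm_cfEval_sub_cfEval_le hl z.2 w.2
  obtain ⟨y, hy, hfix, -⟩ := hcontr.exists_fixedPoint'
    (isClosed_le continuous_const continuous_norm).isComplete hmaps (x := 2)
    (by norm_num [s]) (edist_ne_top _ _)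
  obtain ⟨c, l, rfl⟩ := List.exists_cons_of_ne_nil hne
  exact ⟨y, hfix.eq ▸ five_halves_le_norm_cfEval_cons hl hy, hfix⟩

lemma eq_of_cfEval_eq {L L' : List ℤ} {z z' : ℂ} (hlen : L.length = L'.length)
    (hL : ∀ c ∈ L, 2 < |c|) (hL' : ∀ c ∈ L', 2 < |c|) (hz : 5 / 2 ≤ ‖z‖) (hz' : 5 / 2 ≤ ‖z'‖)
    (heq : cfEval L z = cfEval L' z') : L = L' := by
  induction L generalizing L' with
  | nil => exact (List.length_eq_zero_iff.mp hlen.symm).symm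
  | cons c M ih =>
    obtain ⟨c', M', rfl⟩ := List.exists_cons_of_ne_nil (List.ne_nil_of_length_eq_add_one hlen.symm)
    have hM : ∀ x ∈ M, 2 < |x| := fun x hx => hL x (List.mem_cons_of_mem c hx)
    have hM' : ∀ x ∈ M', 2 < |x| := fun x hx => hL' x (List.mem_cons_of_mem c' hx)
    rw [cfEval_cons, cfEval_cons] at heq
    set w := cfEval M z
    set w' := cfEval M' z'
    have hw := norm_inv_le_of_le_norm (by norm_num) (five_halves_le_norm_cfEval hM hz)
    have hw' := norm_inv_le_of_le_norm (by norm_num) (five_halves_le_norm_cfEval hM' hz')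
    have hdiff : ((c - c' : ℤ) : ℂ) = w'⁻¹ - w⁻¹ := by
      push_cast
      linear_combination heq
    have hcc' : c = c' := by
      have : ‖((c - c' : ℤ) : ℂ)‖ < 1 := by
        rw [hdiff]
        linarith [norm_sub_le w'⁻¹ w⁻¹]
      rw [Complex.norm_intCast] at this
      exact sub_eq_zero.mp (Int.abs_lt_one_iff.mp (by exact_mod_cast this))
    subst hcc'
    have hww' : w = w' := inv_injective (by simpa using heq)
    rw [ih (by simpa using hlen) hM hM' hww']

lemma DlistZ_eq_prod_map {n : ℕ} (x : Fin n → ℤ) : DlistZ x = ((List.ofFn x).map DmZ).prod := by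
  rw [DlistZ, List.map_ofFn]
  rfl

lemma List.ofFn_comp_rev {α : Type*} {n : ℕ} (f : Fin n → α) :
    List.ofFn (f ∘ Fin.rev) = (List.ofFn f).reverse := by
  refine List.ext_getElem (by simp) fun i _ _ => ?_
  simp only [List.getElem_ofFn, List.getElem_reverse, List.length_ofFn, Function.comp_apply]
  congr 1
  ext
  simp only [Fin.val_rev]
  omega

lemma tmZ_mul_tmZ : tmZ * tmZ = 1 := by
  rw [Matrix.one_fin_two]
  simp [tmZ]

lemma tmZ_conj_mul (X Y : Matrix (Fin 2) (Fin 2) ℤ) :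
    tmZ * (X * Y) * tmZ = (tmZ * X * tmZ) * (tmZ * Y * tmZ) := by
  simp only [mul_assoc]
  rw [← mul_assoc tmZ tmZ, tmZ_mul_tmZ, one_mul]

lemma DmZ_mul_tmZ_conj_neg (c : ℤ) : DmZ c * (tmZ * DmZ (-c) * tmZ) = 1 := by
  rw [Matrix.one_fin_two]
  simp [tmZ, DmZ]

lemma prod_map_DmZ_mul_tmZ_conj_reverse (l : List ℤ) :
    (l.map DmZ).prod * (tmZ * (l.reverse.map fun c => DmZ (-c)).prod * tmZ) = 1 := by
  induction l with
  | nil => simp [tmZ_mul_tmZ]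
  | cons c l ih =>
    simp only [List.reverse_cons, List.map_append, List.map_cons, List.map_nil, List.prod_append,
      List.prod_cons, List.prod_nil, mul_one, tmZ_conj_mul]
    rw [mul_assoc (DmZ c), ← mul_assoc (l.map DmZ).prod, ih, one_mul, DmZ_mul_tmZ_conj_neg]

lemma EmatZ_mul_DlistZ {N k : ℕ} (b : Fin N → ℤ) (a : Fin k → ℤ) :
    EmatZ N k b a * DlistZ b = DlistZ b * DlistZ a := by
  have hrev : List.ofFn (fun i => -b i.rev) = (List.ofFn b).reverse.map (fun c => -c) := by
    rw [← List.ofFn_comp_rev, List.map_ofFn]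
    rfl
  have hinv : DlistZ b * (tmZ * DlistZ (fun i => -b i.rev) * tmZ) = 1 := by
    rw [DlistZ_eq_prod_map, DlistZ_eq_prod_map, hrev, List.map_map]
    exact prod_map_DmZ_mul_tmZ_conj_reverse _
  calc EmatZ N k b a * DlistZ b
      = DlistZ b * DlistZ a * ((tmZ * DlistZ (fun i => -b i.rev) * tmZ) * DlistZ b) := by
        simp only [EmatZ, mul_assoc]
    _ = DlistZ b * DlistZ a := by rw [mul_eq_one_comm.mp hinv, mul_one]

lemma mulVec_eq_smul_of_mul_eq {K n : Type*} [Field K] [Fintype n] {E P M : Matrix n n K}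
    (h : E * P = P * M) {v w : n → K} {δ ε : K} (hε : ε ≠ 0) (hv : M *ᵥ v = δ • v)
    (hw : P *ᵥ v = ε • w) : E *ᵥ w = δ • w := by
  refine smul_right_injective _ hε ?_
  calc ε • (E *ᵥ w) = (E * P) *ᵥ v := by rw [← mulVec_mulVec, hw, mulVec_smul]
    _ = ε • δ • w := by rw [h, ← mulVec_mulVec, hv, mulVec_smul, hw, smul_comm]

lemma quadratic_eq_zero_of_mulVec_eq_smul {R : Type*} [CommRing R] {M : Matrix (Fin 2) (Fin 2) R}
    {T δ : R} (h : M *ᵥ ![T, 1] = δ • ![T, 1]) :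
    M 1 0 * T ^ 2 + (M 1 1 - M 0 0) * T - M 0 1 = 0 := by
  simp only [mulVec_fin_two, smul_vec2, vecCons_inj, cons_val_zero, cons_val_one, cons_val_fin_one,
    mul_one, smul_eq_mul, and_true] at h
  linear_combination T * h.2 - h.1

lemma mapMatrix_prod_map_DmZ_mulVec {l : List ℤ} (hl : ∀ c ∈ l, 2 < |c|) {z : ℂ}
    (hz : 2 ≤ ‖z‖) : ∃ δ : ℂ, δ ≠ 0 ∧
      (Int.castRingHom ℂ).mapMatrix (l.map DmZ).prod *ᵥ ![z, 1] = δ • ![cfEval l z, 1] := by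
  induction l with
  | nil => exact ⟨1, one_ne_zero, by simp⟩
  | cons c l ih =>
    have hl' : ∀ x ∈ l, 2 < |x| := fun x hx => hl x (List.mem_cons_of_mem c hx)
    obtain ⟨δ, hδ, hvec⟩ := ih hl'
    have hw : cfEval l z ≠ 0 := norm_pos_iff.mp (by linarith [two_le_norm_cfEval hl' hz])
    refine ⟨δ * cfEval l z, mul_ne_zero hδ hw, ?_⟩
    rw [List.map_cons, List.prod_cons, map_mul, ← mulVec_mulVec, hvec, mulVec_smul]
    simp only [DmZ, RingHom.mapMatrix_apply, Int.coe_castRingHom, mulVec_fin_two, map_apply,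
      of_apply, cons_val', cons_val_zero, cons_val_one, cons_val_fin_one, smul_vec2, smul_eq_mul,
      Int.cast_one, Int.cast_zero, mul_one, one_mul, add_zero, cfEval_cons]
    refine vec2_eq ?_ (by ring)
    field_simp

lemma EmatZ_quadratic_cfEval_eq_zero {N k : ℕ} {b : Fin N → ℤ} {a : Fin k → ℤ}
    (hb : ∀ i, 2 < |b i|) (ha : ∀ j, 2 < |a j|) {y : ℂ} (hy : 2 ≤ ‖y‖)
    (hfix : cfEval (List.ofFn a) y = y) :
    let E := EmatZ N k b a
    let T := cfEval (List.ofFn b) y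
    (E 1 0 : ℂ) * T ^ 2 + ((E 1 1 : ℂ) - E 0 0) * T - E 0 1 = 0 := by
  obtain ⟨δ, -, hδ⟩ := mapMatrix_prod_map_DmZ_mulVec (List.forall_mem_ofFn_iff.mpr ha) hy
  obtain ⟨ε, hε, hε'⟩ := mapMatrix_prod_map_DmZ_mulVec (List.forall_mem_ofFn_iff.mpr hb) hy
  rw [hfix] at hδ
  rw [← DlistZ_eq_prod_map] at hδ hε'
  have hE := congrArg (Int.castRingHom ℂ).mapMatrix (EmatZ_mul_DlistZ b a)
  rw [map_mul, map_mul] at hE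
  simpa using quadratic_eq_zero_of_mulVec_eq_smul (mulVec_eq_smul_of_mul_eq hE hε hδ hε')

lemma eq_or_eq_of_smul_quadratic_eq_zero {A B C : ℤ} (hA : A ≠ 0) {β βs : ℂ}
    (hroots : ∀ x : ℂ, (A : ℂ) * x ^ 2 + (B : ℂ) * x + (C : ℂ) = (A : ℂ) * (x - β) * (x - βs))
    {u T : ℂ} (hu : u ≠ 0) (h : u * A * T ^ 2 + u * B * T + u * C = 0) : T = β ∨ T = βs := by
  have : u * ((A : ℂ) * (T - β) * (T - βs)) = 0 := by
    rw [← hroots]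
    linear_combination h
  simpa [hu, hA, sub_eq_zero, or_assoc] using this

lemma ofFn_append_injective {α : Type*} {N k : ℕ} :
    Function.Injective fun p : (Fin N → α) × (Fin k → α) => List.ofFn p.1 ++ List.ofFn p.2 := by
  intro p q h
  obtain ⟨h₁, h₂⟩ := List.append_inj h (by simp)
  exact Prod.ext (List.ofFn_injective h₁) (List.ofFn_injective h₂)

lemma Set.exists_subset_pair_of_injOn_of_mapsTo {α β : Type*} [Nonempty α] {s : Set α}
    {f : α → β} {c₁ c₂ : β} (hinj : InjOn f s) (hmaps : MapsTo f s {c₁, c₂}) :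
    ∃ p₁ p₂, s ⊆ {p₁, p₂} := by
  refine ⟨Function.invFunOn f s c₁, Function.invFunOn f s c₂, fun p hp => ?_⟩
  rw [← hinj.leftInvOn_invFunOn hp]
  rcases hmaps hp with h | h <;> simp_all

theorem stmt19_general (A B C : ℤ) (hA : A ≠ 0) (β βs : ℂ)
    (hroots : ∀ x : ℂ, (A : ℂ) * x ^ 2 + (B : ℂ) * x + (C : ℂ)
      = (A : ℂ) * (x - β) * (x - βs))
    (N k : ℕ) (hk : 1 ≤ k) :
    ∃ p₁ p₂ : (Fin N → ℤ) × (Fin k → ℤ),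
      {p : (Fin N → ℤ) × (Fin k → ℤ) |
        (∃ u : ℂ, u ≠ 0 ∧
          ((EmatZ N k p.1 p.2) 1 0 : ℂ) = u * A ∧
          (((EmatZ N k p.1 p.2) 1 1 - (EmatZ N k p.1 p.2) 0 0 : ℤ) : ℂ) = u * B ∧
          ((-(EmatZ N k p.1 p.2) 0 1 : ℤ) : ℂ) = u * C) ∧
        (∀ i, 2 < |p.1 i|) ∧ (∀ j, 2 < |p.2 j|)} ⊆ {p₁, p₂} := by
  have hperiod : ∀ a : Fin k → ℤ, (∀ j, 2 < |a j|) →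
      ∃ y : ℂ, 5 / 2 ≤ ‖y‖ ∧ cfEval (List.ofFn a) y = y := fun a ha =>
    exists_cfEval_eq_self (List.ofFn_eq_nil_iff.not.mpr (by omega)) (List.forall_mem_ofFn_iff.mpr ha)
  choose! y hy_norm hy_fix using hperiod
  refine Set.exists_subset_pair_of_injOn_of_mapsTo
    (f := fun p => cfEval (List.ofFn p.1) (y p.2)) (c₁ := β) (c₂ := βs) ?_ ?_
  · rintro p ⟨-, hb, ha⟩ q ⟨-, hb', ha'⟩ (heq : cfEval _ _ = cfEval _ _)
    apply ofFn_append_injective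
    refine eq_of_cfEval_eq (by simp) ?_ ?_ (hy_norm _ ha) (hy_norm _ ha') ?_
    · exact List.forall_mem_append.mpr
        ⟨List.forall_mem_ofFn_iff.mpr hb, List.forall_mem_ofFn_iff.mpr ha⟩
    · exact List.forall_mem_append.mpr
        ⟨List.forall_mem_ofFn_iff.mpr hb', List.forall_mem_ofFn_iff.mpr ha'⟩
    · rwa [cfEval_append, cfEval_append, hy_fix _ ha, hy_fix _ ha']
  · rintro p ⟨⟨u, hu, h₁₀, h₁₁, h₀₁⟩, hb, ha⟩
    have hT := EmatZ_quadratic_cfEval_eq_zero hb ha (by linarith [hy_norm _ ha]) (hy_fix _ ha)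
    set T := cfEval (List.ofFn p.1) (y p.2)
    push_cast at h₁₁ h₀₁
    exact eq_or_eq_of_smul_quadratic_eq_zero hA hroots hu
      (by linear_combination hT - T ^ 2 * h₁₀ - T * h₁₁ - h₀₁)

/-- Let `ℬ = {β, β*}` be the roots of an integer quadratic `Ax² + Bx + C` with
`β` irrational, and `N ≥ 0`, `k ≥ 1`, `N + k > 2`.  The set of integer points
of the PCF variety `V(ℬ)_{N,k}` (points whose associated quadratic
`E₂₁x² + (E₂₂ - E₁₁)x - E₁₂` is a nonzero multiple of `Ax² + Bx + C`) all of
whose coordinates have absolute value `> 2` has cardinality at most `2`. -/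
theorem stmt19 (A B C : ℤ) (hA : A ≠ 0) (β βs : ℂ)
    (hroots : ∀ x : ℂ, (A : ℂ) * x ^ 2 + (B : ℂ) * x + (C : ℂ)
      = (A : ℂ) * (x - β) * (x - βs))
    (hβ : ∀ q : ℚ, (q : ℂ) ≠ β)
    (N k : ℕ) (hk : 1 ≤ k) (hNk : 2 < N + k) :
    ∃ p₁ p₂ : (Fin N → ℤ) × (Fin k → ℤ),
      {p : (Fin N → ℤ) × (Fin k → ℤ) |
        (∃ u : ℂ, u ≠ 0 ∧
          ((EmatZ N k p.1 p.2) 1 0 : ℂ) = u * A ∧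
          (((EmatZ N k p.1 p.2) 1 1 - (EmatZ N k p.1 p.2) 0 0 : ℤ) : ℂ) = u * B ∧
          ((-(EmatZ N k p.1 p.2) 0 1 : ℤ) : ℂ) = u * C) ∧
        (∀ i, 2 < |p.1 i|) ∧ (∀ j, 2 < |p.2 j|)} ⊆ {p₁, p₂} :=
  stmt19_general A B C hA β βs hroots N k hk
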